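/- No sequence rule can be both rank-aware and strongly lexicographic. -/

import Mathlib

/-!
Formalization of the ranked-delegation (liquid democracy) setting of
"Liquid Democracy with Ranked Delegations".

Vertices are natural numbers.  An instance carries the vertex set `V`,
the edge set `E`, the distinguished set `C` of casting voters (which have
no outgoing edges), and a rank function such that for every vertex the
ranks of its outgoing edges are exactly `{1, ..., outdeg}`.
-/

namespace RankedDelegation

/-- A ranked delegation instance `(G, r)`. -/
structure Instance where
  V : Finset ℕ
  E : Finset (ℕ × ℕ)
  C : Finset ℕ
  C_sub : C ⊆ V
  edge_mem : ∀ e ∈ E, e.1 ∈ V ∧ e.2 ∈ V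
  C_no_out : ∀ e ∈ E, e.1 ∉ C
  rank : ℕ × ℕ → ℕ
  rank_prop : ∀ v ∈ V,
    (E.filter (fun e => e.1 = v)).image rank =
      Finset.Icc 1 (E.filter (fun e => e.1 = v)).card

/-- A simple path from `v` to a casting voter, represented by its list of
vertices (so it has at least one edge, i.e. at least two vertices). -/
def IsDelegPath (G : Instance) (v : ℕ) (p : List ℕ) : Prop :=
  2 ≤ p.length ∧ p.head? = some v ∧ p.Nodup ∧
  (∀ e ∈ p.zip p.tail, e ∈ G.E) ∧
  (∃ c ∈ G.C, p.getLast? = some c)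

/-- Delegating voters: members of `V` admitting a path to a casting voter.
(Casting voters have no outgoing edges, so they are never `Delegating`.) -/
def Delegating (G : Instance) (v : ℕ) : Prop :=
  v ∈ G.V ∧ ∃ p, IsDelegPath G v p

/-- Isolated voters: neither casting nor delegating. -/
def Isolated (G : Instance) (v : ℕ) : Prop :=
  v ∈ G.V ∧ v ∉ G.C ∧ ¬ Delegating G v

/-- The rank sequence `s(P)` of a path `P`. -/
def seqOf (G : Instance) (p : List ℕ) : List ℕ :=
  (p.zip p.tail).map G.rank

/-- `S_v`, the set of rank sequences of paths from `v` to casting voters. -/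
def Seqs (G : Instance) (v : ℕ) : Set (List ℕ) :=
  {s | ∃ p, IsDelegPath G v p ∧ seqOf G p = s}

/-- Membership in `𝒮`: all entries are positive. -/
def PosSeq (s : List ℕ) : Prop := ∀ x ∈ s, 1 ≤ x

/-- Two sequences are comparable if some instance realizes `S_v = {s, s'}`. -/
def Comparable (s s' : List ℕ) : Prop :=
  ∃ (G : Instance) (v : ℕ), Seqs G v = {s, s'}

/-- A set of sequences is comparable if its elements are pairwise comparable. -/
def ComparableSet (S : Set (List ℕ)) : Prop := S.Pairwise Comparable

/-- `R` restricted to any comparable subset of `𝒮` is a (strict) linear order. -/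
def LinearOnComparable (R : List ℕ → List ℕ → Prop) : Prop :=
  ∀ S : Set (List ℕ), ComparableSet S →
    (∀ s ∈ S, ¬ R s s) ∧
    (∀ s ∈ S, ∀ t ∈ S, ∀ u ∈ S, R s t → R t u → R s u) ∧
    (∀ s ∈ S, ∀ t ∈ S, s ≠ t → R s t ∨ R t s)

/-- `s` is the `R`-maximum (i.e. `R`-best) element of `S`. -/
def IsMaxOf (R : List ℕ → List ℕ → Prop) (S : Set (List ℕ)) (s : List ℕ) : Prop :=
  s ∈ S ∧ ∀ t ∈ S, t ≠ s → R s t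

/-- A delegation rule assigns to every instance and every delegating voter a
path from that voter to a casting voter. -/
structure DelegationRule where
  path : Instance → ℕ → List ℕ
  valid : ∀ G v, Delegating G v → IsDelegPath G v (path G v)

/-- `f` is a sequence rule induced by the relation `R`. -/
def IsSequenceRule (f : DelegationRule) (R : List ℕ → List ℕ → Prop) : Prop :=
  LinearOnComparable R ∧
  ∀ (G : Instance) (v : ℕ), Delegating G v →
    IsMaxOf R (Seqs G v) (seqOf G (f.path G v))

/-- Confluence: in the union of all selected paths, every delegating voter
has outdegree exactly one. -/
def Confluent (f : DelegationRule) : Prop :=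
  ∀ (G : Instance) (v : ℕ), Delegating G v →
    ∃! w : ℕ, ∃ u : ℕ, Delegating G u ∧
      (v, w) ∈ (f.path G u).zip (f.path G u).tail

/-- The (strict) lexicographic order `▷_lex` ("better than"). -/
def lexRel (s s' : List ℕ) : Prop := List.Lex (· < ·) s s'

/-- The order inducing breadth-first delegation: shorter first, ties by lex. -/
def bfdRel (s s' : List ℕ) : Prop :=
  s.length < s'.length ∨ (s.length = s'.length ∧ lexRel s s')

/-- The order inducing MinSum: smaller sum of ranks first, ties by lex. -/
def minSumRel (s s' : List ℕ) : Prop :=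
  s.sum < s'.sum ∨ (s.sum = s'.sum ∧ lexRel s s')

/-- `σ(s)`: the entries of `s` sorted in non-increasing order. -/
def sortDesc (s : List ℕ) : List ℕ := ((s : Multiset ℕ).sort (· ≤ ·)).reverse

/-- The order `▷_σ` inducing Leximax. -/
def leximaxRel (s s' : List ℕ) : Prop :=
  lexRel (sortDesc s) (sortDesc s') ∨ (sortDesc s = sortDesc s' ∧ lexRel s s')

/-- The set `F` of minimum-rank edges with head in `A` and tail outside `A`. -/
def diffF (G : Instance) (A : Finset ℕ) : Finset (ℕ × ℕ) :=
  G.E.filter (fun e => e.2 ∈ A ∧ e.1 ∉ A ∧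
    ∀ e' ∈ G.E, e'.2 ∈ A → e'.1 ∉ A → G.rank e ≤ G.rank e')

/-- The set of assigned voters after `k` rounds of the diffusion process
(initially the casting voters). -/
def diffA (G : Instance) : ℕ → Finset ℕ
  | 0 => G.C
  | k + 1 => diffA G k ∪ (diffF G (diffA G k)).image Prod.fst

/-- `f` is the Diffusion rule: every delegating voter `v` is assigned, at the
round where it acquires a minimum-rank edge `(v, w)` into the assigned set,
the path consisting of `(v, w)` followed by the path of `w`. -/
def IsDiffusion (f : DelegationRule) : Prop :=
  ∀ (G : Instance) (v : ℕ), Delegating G v →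
    ∃ (k : ℕ) (w : ℕ), (v, w) ∈ diffF G (diffA G k) ∧
      ((w ∈ G.C ∧ f.path G v = [v, w]) ∨
       (Delegating G w ∧ f.path G v = v :: f.path G w))

/-- Maximum entry of a sequence (0 for the empty sequence, by convention). -/
def maxR (s : List ℕ) : ℕ := s.foldr max 0

/-- Fuelled version of the diffusion order on sequences without a joint
prefix; the fuel only has to exceed the length of the first argument. -/
def diffRelAux : ℕ → List ℕ → List ℕ → Prop
  | 0, _, _ => False
  | n + 1, s, s' =>
    maxR s < maxR s' ∨
    (maxR s = maxR s' ∧ s.count (maxR s) < s'.count (maxR s')) ∨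
    (maxR s = maxR s' ∧ s.count (maxR s) = s'.count (maxR s') ∧
      (s.takeWhile (fun x => x ≠ maxR s) = [] ∨
        diffRelAux n (s.takeWhile (fun x => x ≠ maxR s))
          (s'.takeWhile (fun x => x ≠ maxR s'))))

/-- The diffusion order `▷_diff` for sequences with no joint prefix. -/
def diffRel0 (s s' : List ℕ) : Prop := diffRelAux (s.length + 1) s s'

/-- Strip the longest common prefix of two sequences. -/
def stripCP : List ℕ → List ℕ → List ℕ × List ℕ
  | a :: s, b :: s' => if a = b then stripCP s s' else (a :: s, b :: s')
  | s, s' => (s, s')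

/-- The diffusion order `▷_diff`. -/
def diffRel (s s' : List ℕ) : Prop :=
  diffRel0 (stripCP s s').1 (stripCP s s').2

/-- The relative voting weight `ω_f(G, r, c)` of a voter `c`. -/
noncomputable def weight (f : DelegationRule) (G : Instance) (c : ℕ) : ℚ :=
  ((Set.ncard {d | Delegating G d ∧ (f.path G d).getLast? = some c} : ℚ) + 1) /
    ((G.C.card : ℚ) + (Set.ncard {d | Delegating G d} : ℚ))

/-- Guru-participation: deleting the outgoing edges of a delegating voter `v`
(keeping the casting voters unchanged) does not decrease the relative weight
of any casting voter other than `v`'s representative. -/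
def GuruParticipation (f : DelegationRule) : Prop :=
  ∀ (G G' : Instance) (v c : ℕ),
    Delegating G v → (f.path G v).getLast? = some c →
    G'.V = G.V → G'.C = G.C → G'.rank = G.rank →
    G'.E = G.E.filter (fun e => e.1 ≠ v) →
    ∀ u ∈ G.C, u ≠ c → weight f G u ≤ weight f G' u

/-- Copy-robustness: if a delegating voter `v` is assigned a path of length
one ending in the casting voter `c`, then turning `v` into a casting voter
(deleting its outgoing edges) preserves the joint weight of `v` and `c`. -/
def CopyRobust (f : DelegationRule) : Prop :=
  ∀ (G G' : Instance) (v c : ℕ),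
    Delegating G v → (f.path G v).length = 2 →
    (f.path G v).getLast? = some c →
    G'.V = G.V → G'.C = insert v G.C → G'.rank = G.rank →
    G'.E = G.E.filter (fun e => e.1 ≠ v) →
    weight f G c = weight f G' c + weight f G' v

/-- A directed cycle through the edge set `B`, given as a nonempty list of
consecutive edges whose last edge returns to the head of the first one. -/
def IsEdgeCycle (B : Finset (ℕ × ℕ)) (l : List (ℕ × ℕ)) : Prop :=
  l ≠ [] ∧ (∀ e ∈ l, e ∈ B) ∧ List.Chain' (fun e e' => e.2 = e'.1) l ∧
  ∃ e₁ e₂, l.head? = some e₁ ∧ l.getLast? = some e₂ ∧ e₂.2 = e₁.1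

def Acyclic (B : Finset (ℕ × ℕ)) : Prop := ¬ ∃ l, IsEdgeCycle B l

/-- Edges of the reduced graph `Ḡ`: edges of `G` between voters of `C ∪ D`. -/
def InReduced (G : Instance) (e : ℕ × ℕ) : Prop :=
  e ∈ G.E ∧ (e.1 ∈ G.C ∨ Delegating G e.1) ∧ (e.2 ∈ G.C ∨ Delegating G e.2)

/-- A `C`-branching in the reduced graph: an acyclic set of reduced edges in
which every delegating voter has outdegree exactly one. -/
def IsCBranching (G : Instance) (B : Finset (ℕ × ℕ)) : Prop :=
  (∀ e ∈ B, InReduced G e) ∧ Acyclic B ∧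
  ∀ v : ℕ, Delegating G v → ∃! w : ℕ, (v, w) ∈ B

/-- The Borda score of a branching: the sum of the ranks of its edges. -/
def score (G : Instance) (B : Finset (ℕ × ℕ)) : ℕ := ∑ e ∈ B, G.rank e

/-- The rank of the (unique) outgoing edge of `v` in `B` (0 if none). -/
def rankOut (G : Instance) (B : Finset (ℕ × ℕ)) (v : ℕ) : ℕ :=
  ∑ e ∈ B.filter (fun e => e.1 = v), G.rank e

/-- Priority-order tie-breaking: `B` is preferred to `B'` if some (delegating)
voter `v₀` gets a strictly smaller rank in `B`, while all delegating voters
with smaller priority get equal ranks in `B` and `B'`. -/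
def PrioPref (G : Instance) (π : ℕ → ℕ) (B B' : Finset (ℕ × ℕ)) : Prop :=
  ∃ v₀ : ℕ, Delegating G v₀ ∧ rankOut G B v₀ < rankOut G B' v₀ ∧
    ∀ v : ℕ, Delegating G v → π v < π v₀ → rankOut G B v = rankOut G B' v

/-- `f` is BordaBranching with priority order `π`: on every instance the
paths of `f` are read off from a rank-sum-minimal `C`-branching which is
moreover preferred (w.r.t. `π`) to every other minimal `C`-branching. -/
def IsBordaBranching (f : DelegationRule) (π : ℕ → ℕ) : Prop :=
  Function.Injective π ∧
  ∀ G : Instance, ∃ B : Finset (ℕ × ℕ), IsCBranching G B ∧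
    (∀ B', IsCBranching G B' → score G B ≤ score G B') ∧
    (∀ B', IsCBranching G B' → score G B' = score G B → B' ≠ B → PrioPref G π B B') ∧
    (∀ v : ℕ, Delegating G v → ∀ e ∈ (f.path G v).zip (f.path G v).tail, e ∈ B)

/-- Weakly lexicographic: on comparable sequences of equal length differing
only in the last entry, `R` agrees with the lexicographic order. -/
def WeaklyLex (R : List ℕ → List ℕ → Prop) : Prop :=
  ∀ (t : List ℕ) (a b : ℕ), Comparable (t ++ [a]) (t ++ [b]) →
    (R (t ++ [a]) (t ++ [b]) ↔ lexRel (t ++ [a]) (t ++ [b]))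

/-- Strongly lexicographic: on comparable sequences of equal length, `R`
agrees with the lexicographic order. -/
def StronglyLex (R : List ℕ → List ℕ → Prop) : Prop :=
  ∀ s s' : List ℕ, Comparable s s' → s.length = s'.length →
    (R s s' ↔ lexRel s s')

/-- Rank-awareness: among comparable sequences, one with a strictly smaller
maximum entry is preferred. -/
def RankAware (R : List ℕ → List ℕ → Prop) : Prop :=
  ∀ s s' : List ℕ, Comparable s s' → maxR s < maxR s' → R s s'

/-- Two sequences have no joint prefix (their heads differ, if any). -/
def NoJointPrefix (s s' : List ℕ) : Prop :=
  ∀ a : ℕ, ¬ (s.head? = some a ∧ s'.head? = some a)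

/-- Truncation: comparisons may be decided on the parts before a dominating
joint entry `x`. -/
def Truncation (R : List ℕ → List ℕ → Prop) : Prop :=
  ∀ s s' t t' : List ℕ, PosSeq s → PosSeq s' → PosSeq t → PosSeq t' →
    Comparable s s' → NoJointPrefix s s' →
    ∀ x : ℕ, 1 ≤ x → maxR t < x → maxR t' < x →
    R (s ++ x :: t) (s' ++ x :: t') → R s s'

/-!
A voter with exactly two paths to casting voters, with rank sequences `(1, 3)` and `(2, 1)`,
makes these two sequences comparable. Strong lexicographicity prefers `(1, 3)`, rank-awareness
prefers `(2, 1)` since `2 < 3`; but a relation that is a strict linear order on `{(1, 3), (2, 1)}`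
cannot prefer each one to the other.
-/

theorem Comparable.symm {s s' : List ℕ} (h : Comparable s s') : Comparable s' s := by
  obtain ⟨G, v, hG⟩ := h
  exact ⟨G, v, hG.trans (Set.pair_comm s s')⟩

theorem Comparable.comparableSet_pair {s s' : List ℕ} (h : Comparable s s') :
    ComparableSet {s, s'} := by
  rintro a (rfl | rfl) b (rfl | rfl) hab
  exacts [absurd rfl hab, h, h.symm, absurd rfl hab]

theorem LinearOnComparable.asymm {R : List ℕ → List ℕ → Prop} (hR : LinearOnComparable R)
    {s s' : List ℕ} (h : Comparable s s') (hss' : R s s') : ¬ R s' s := fun hs's =>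
  let ⟨irrefl, transitive, _⟩ := hR _ h.comparableSet_pair
  irrefl s (by simp) (transitive s (by simp) s' (by simp) s (by simp) hss' hs's)

theorem IsDelegPath.exists_cons_cons {G : Instance} {v : ℕ} {p : List ℕ}
    (hp : IsDelegPath G v p) : ∃ w q, p = v :: w :: q ∧ (v, w) ∈ G.E ∧
      ((q = [] ∧ w ∈ G.C) ∨ IsDelegPath G w (w :: q)) := by
  obtain ⟨hlen, hhead, hnodup, hedges, c, hc, hlast⟩ := hp
  match p, hlen, hhead with
  | v' :: w :: q, _, hhead =>
    obtain rfl : v' = v := Option.some.inj hhead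
    refine ⟨w, q, rfl, hedges _ (by simp), ?_⟩
    rcases q with _ | ⟨x, q⟩
    · exact Or.inl ⟨rfl, by simpa [← Option.some.inj hlast] using hc⟩
    · refine Or.inr ⟨by simp, rfl, (List.nodup_cons.mp hnodup).2, ?_, c, hc, ?_⟩
      · exact fun e he => hedges e (List.mem_cons_of_mem _ he)
      · simpa using hlast

theorem mem_seqs_cases {G : Instance} {v : ℕ} {s : List ℕ} (hs : s ∈ Seqs G v) :
    ∃ w, (v, w) ∈ G.E ∧
      ((w ∈ G.C ∧ s = [G.rank (v, w)]) ∨ ∃ s' ∈ Seqs G w, s = G.rank (v, w) :: s') := by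
  obtain ⟨p, hp, rfl⟩ := hs
  obtain ⟨w, q, rfl, hvw, (⟨rfl, hw⟩ | hq)⟩ := hp.exists_cons_cons
  · exact ⟨w, hvw, Or.inl ⟨hw, rfl⟩⟩
  · exact ⟨w, hvw, Or.inr ⟨_, ⟨_, hq, rfl⟩, rfl⟩⟩

theorem seqs_eq_empty_of_forall_notMem {G : Instance} {v : ℕ} (hv : ∀ w, (v, w) ∉ G.E) :
    Seqs G v = ∅ :=
  Set.eq_empty_of_forall_notMem fun _ hs =>
    let ⟨w, hvw, _⟩ := mem_seqs_cases hs
    hv w hvw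

theorem seqs_subset_of_forall_edge {G : Instance} {v : ℕ} {T : Set (List ℕ)}
    (h : ∀ w, (v, w) ∈ G.E →
      (w ∈ G.C → [G.rank (v, w)] ∈ T) ∧ ∀ s ∈ Seqs G w, G.rank (v, w) :: s ∈ T) :
    Seqs G v ⊆ T := by
  intro s hs
  obtain ⟨w, hvw, (⟨hw, rfl⟩ | ⟨s', hs', rfl⟩)⟩ := mem_seqs_cases hs
  exacts [(h w hvw).1 hw, (h w hvw).2 s' hs']

/-- The edges of ranks `1` and `2` out of voter `1` lead to the dead ends `5` and `6`, so the only
paths from `0` are `0 → 1 → 3` with ranks `(1, 3)` and `0 → 2 → 4` with ranks `(2, 1)`. -/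
def rankVsLexInstance : Instance where
  V := {0, 1, 2, 3, 4, 5, 6}
  E := {(0, 1), (0, 2), (1, 5), (1, 6), (1, 3), (2, 4)}
  C := {3, 4}
  C_sub := by decide
  edge_mem := by decide
  C_no_out := by decide
  rank
    | (0, 1) => 1
    | (0, 2) => 2
    | (1, 5) => 1
    | (1, 6) => 2
    | (1, 3) => 3
    | (2, 4) => 1
    | _ => 0
  rank_prop := by decide

theorem rankVsLexInstance_seqs_of_ge_three {v : ℕ} (hv : 3 ≤ v) : Seqs rankVsLexInstance v = ∅ :=
  seqs_eq_empty_of_forall_notMem fun w hvw => by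
    simp only [rankVsLexInstance, Finset.mem_insert, Finset.mem_singleton, Prod.mk.injEq] at hvw
    omega

theorem rankVsLexInstance_seqs_one : Seqs rankVsLexInstance 1 ⊆ {[3]} := by
  refine seqs_subset_of_forall_edge fun w hw => ?_
  obtain rfl | rfl | rfl : w = 5 ∨ w = 6 ∨ w = 3 := by simpa [rankVsLexInstance] using hw
  all_goals
    simp (disch := omega) only [rankVsLexInstance_seqs_of_ge_three, Set.mem_empty_iff_false,
      Set.mem_singleton_iff, IsEmpty.forall_iff, forall_const, and_true]
    decide

theorem rankVsLexInstance_seqs_two : Seqs rankVsLexInstance 2 ⊆ {[1]} := by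
  refine seqs_subset_of_forall_edge fun w hw => ?_
  obtain rfl : w = 4 := by simpa [rankVsLexInstance] using hw
  simp (disch := omega) only [rankVsLexInstance_seqs_of_ge_three, Set.mem_empty_iff_false,
    Set.mem_singleton_iff, IsEmpty.forall_iff, forall_const, and_true]
  decide

theorem rankVsLexInstance_seqs_zero : Seqs rankVsLexInstance 0 = {[1, 3], [2, 1]} := by
  refine subset_antisymm (seqs_subset_of_forall_edge fun w hw => ?_) ?_
  · obtain rfl | rfl : w = 1 ∨ w = 2 := by simpa [rankVsLexInstance] using hw
    · refine ⟨fun h => absurd h (by decide), fun s hs => ?_⟩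
      obtain rfl : s = [3] := rankVsLexInstance_seqs_one hs
      exact Or.inl rfl
    · refine ⟨fun h => absurd h (by decide), fun s hs => ?_⟩
      obtain rfl : s = [1] := rankVsLexInstance_seqs_two hs
      exact Or.inr rfl
  · rintro s (rfl | rfl)
    · exact ⟨[0, 1, 3], by unfold IsDelegPath; decide, rfl⟩
    · exact ⟨[0, 2, 4], by unfold IsDelegPath; decide, rfl⟩

/-- no sequence rule is both rank-aware and strongly
lexicographic. -/
theorem no_rank_aware_strongly_lex (f : DelegationRule)
    (R : List ℕ → List ℕ → Prop) (hf : IsSequenceRule f R) :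
    ¬ (RankAware R ∧ StronglyLex R) := by
  rintro ⟨hRankAware, hStronglyLex⟩
  have hcomp : Comparable [1, 3] [2, 1] := ⟨rankVsLexInstance, 0, rankVsLexInstance_seqs_zero⟩
  have hLexPrefers : R [1, 3] [2, 1] := (hStronglyLex _ _ hcomp rfl).mpr (List.Lex.rel (by decide))
  have hRankPrefers : R [2, 1] [1, 3] := hRankAware _ _ hcomp.symm (by decide)
  exact hf.1.asymm hcomp hLexPrefers hRankPrefers

end RankedDelegation
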